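/- arXiv:2501.17448 — 2 statements merged into one kernel-verified Lean document; each statement's English description precedes it below -/
import Mathlib

section
/- The rational orthogonal group O(n,ℚ), consisting of all real orthogonal n×n matrices whose entries are rational numbers, is a dense subset of the real orthogonal group O(n,ℝ). -/
/-!
The Cayley transform `A ↦ (1 - A) (1 + A)⁻¹` is an involution exchanging skew-symmetric matrices
and orthogonal matrices `W` with `1 + W` invertible; it is continuous on skew-symmetric matrices
and sends rational matrices to rational ones. As rational skew-symmetric matrices are dense in the
real ones, every orthogonal `W` with `1 + W` invertible is a limit of rational orthogonal matrices.
An arbitrary orthogonal `U` is brought into this form by a diagonal sign matrix `D`: since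
`det (U + diagonal d)` is affine in each `d i`, the entries of `d` can be moved to `±1` one at a
time without making the determinant vanish, and then `1 + D U = D (U + D)` is invertible.
-/

open scoped Matrix

namespace Matrix

variable {n : Type*}

section SignDiagonal

variable [Fintype n] [DecidableEq n]

theorem det_add_diagonal_update {R : Type*} [CommRing R] (M : Matrix n n R) (d : n → R) (i : n)
    (t : R) :
    (M + diagonal (Function.update d i t)).det =
      ((M + diagonal d).updateCol i fun k => M k i).det +
        t * ((M + diagonal d).updateCol i (Pi.single i 1)).det := by
  have hcol : M + diagonal (Function.update d i t) =
      (M + diagonal d).updateCol i ((fun k => M k i) + t • Pi.single i 1) := by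
    ext k l
    rcases eq_or_ne l i with rfl | hl <;> rcases eq_or_ne k l with rfl | hk <;> simp [*]
  rw [hcol, det_updateCol_add, det_updateCol_smul]

variable {K : Type*} [Field K]

theorem exists_sign_det_add_diagonal_update_ne_zero [NeZero (2 : K)] (M : Matrix n n K)
    {d : n → K} (h : (M + diagonal d).det ≠ 0) (i : n) :
    ∃ ε : K, (ε = 1 ∨ ε = -1) ∧ (M + diagonal (Function.update d i ε)).det ≠ 0 := by
  set a := ((M + diagonal d).updateCol i fun k => M k i).det
  set b := ((M + diagonal d).updateCol i (Pi.single i 1)).det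
  have hd : a + d i * b ≠ 0 := by rwa [← det_add_diagonal_update, Function.update_eq_self]
  by_contra! hc
  have hp : a + 1 * b = 0 := by rw [← det_add_diagonal_update]; exact hc 1 (.inl rfl)
  have hm : a + -1 * b = 0 := by rw [← det_add_diagonal_update]; exact hc (-1) (.inr rfl)
  have ha : (2 : K) * a = 0 := by linear_combination hp + hm
  have hb : (2 : K) * b = 0 := by linear_combination hp - hm
  apply hd
  rw [(mul_eq_zero.1 ha).resolve_left two_ne_zero, (mul_eq_zero.1 hb).resolve_left two_ne_zero]
  ring

theorem exists_det_add_scalar_ne_zero [Infinite K] (M : Matrix n n K) :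
    ∃ t : K, (M + scalar n t).det ≠ 0 := by
  obtain ⟨t, ht⟩ :=
    (Polynomial.finite_setOfPred_isRoot (-M).charpoly_monic.ne_zero).infinite_compl.nonempty
  exact ⟨t, by simpa [eval_charpoly, add_comm] using ht⟩

theorem exists_sign_det_add_diagonal_ne_zero [Infinite K] [NeZero (2 : K)] (M : Matrix n n K) :
    ∃ d : n → K, (∀ i, d i = 1 ∨ d i = -1) ∧ (M + diagonal d).det ≠ 0 := by
  suffices ∀ s : Finset n, ∃ d : n → K, (∀ i ∈ s, d i = 1 ∨ d i = -1) ∧ (M + diagonal d).det ≠ 0 by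
    simpa using this Finset.univ
  intro s
  induction s using Finset.induction_on with
  | empty =>
    obtain ⟨t, ht⟩ := exists_det_add_scalar_ne_zero M
    exact ⟨fun _ => t, by simp, ht⟩
  | insert i s _ ih =>
    obtain ⟨d, hd, hdet⟩ := ih
    obtain ⟨ε, hε, hdet'⟩ := exists_sign_det_add_diagonal_update_ne_zero M hdet i
    refine ⟨Function.update d i ε, fun j hj => ?_, hdet'⟩
    rcases eq_or_ne j i with rfl | hji
    · simpa using hε
    · simpa [hji] using hd j ((Finset.mem_insert.1 hj).resolve_left hji)

end SignDiagonal

section Cayley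

variable [Fintype n] [DecidableEq n]

theorem det_one_add_ne_zero_of_transpose_eq_neg {K : Type*} [Field K] [LinearOrder K]
    [IsStrictOrderedRing K] {A : Matrix n n K} (hA : Aᵀ = -A) : (1 + A).det ≠ 0 := by
  intro h
  obtain ⟨v, hv, hker⟩ := exists_mulVec_eq_zero_iff.2 h
  have hquad : v ⬝ᵥ (A *ᵥ v) = 0 := by
    have htr : v ⬝ᵥ (Aᵀ *ᵥ v) = v ⬝ᵥ (A *ᵥ v) := by
      rw [dotProduct_mulVec, vecMul_transpose, dotProduct_comm]
    rw [hA, neg_mulVec, dotProduct_neg] at htr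
    linarith
  have hself : v ⬝ᵥ v = 0 := by
    simpa [add_mulVec, dotProduct_add, hquad] using congrArg (v ⬝ᵥ ·) hker
  exact hv (dotProduct_self_eq_zero.1 hself)

variable {R : Type*} [CommRing R]

noncomputable def cayley (A : Matrix n n R) : Matrix n n R := (1 - A) * (1 + A)⁻¹

theorem cayley_transpose_mul_self {A : Matrix n n R} (hA : Aᵀ = -A) (h : IsUnit (1 + A).det) :
    (cayley A)ᵀ * cayley A = 1 := by
  have hplus : (1 + A)ᵀ = 1 - A := by rw [transpose_add, transpose_one, hA, sub_eq_add_neg]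
  have hminus : (1 - A)ᵀ = 1 + A := by rw [transpose_sub, transpose_one, hA, sub_neg_eq_add]
  have h' : IsUnit (1 - A).det := by rwa [← hplus, det_transpose]
  have hcomm : (1 + A) * (1 - A) = (1 - A) * (1 + A) := by noncomm_ring
  rw [cayley, transpose_mul, transpose_nonsing_inv, hplus, hminus, mul_assoc,
    ← mul_assoc (1 + A), hcomm, mul_assoc, mul_nonsing_inv _ h, mul_one, nonsing_inv_mul _ h']

theorem transpose_cayley {W : Matrix n n R} (hW : Wᵀ * W = 1) (h : IsUnit (1 + W).det) :
    (cayley W)ᵀ = -cayley W := by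
  have hunit : IsUnit (1 + W) := (isUnit_iff_isUnit_det _).2 h
  have hunitT : IsUnit (1 + W)ᵀ := (isUnit_iff_isUnit_det _).2 (by rwa [det_transpose])
  have hcancel : cayley W * (1 + W) = 1 - W := by
    rw [cayley, mul_assoc, nonsing_inv_mul _ h, mul_one]
  -- Congruence by the invertible `1 + W` turns `cayley W` into the skew matrix `Wᵀ - W`.
  have hskew : (1 + W)ᵀ * cayley W * (1 + W) = Wᵀ - W := by
    rw [mul_assoc, hcancel, transpose_add, transpose_one]
    calc (1 + Wᵀ) * (1 - W) = 1 + Wᵀ - W - Wᵀ * W := by noncomm_ring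
      _ = Wᵀ - W := by rw [hW]; abel
  apply hunit.mul_right_cancel
  apply hunitT.mul_left_cancel
  calc (1 + W)ᵀ * ((cayley W)ᵀ * (1 + W)) = ((1 + W)ᵀ * cayley W * (1 + W))ᵀ := by
        simp only [transpose_mul, transpose_transpose, mul_assoc]
    _ = (1 + W)ᵀ * (-cayley W * (1 + W)) := by
        rw [neg_mul, mul_neg, ← mul_assoc, hskew, transpose_sub, transpose_transpose, neg_sub]

theorem cayley_cayley [Invertible (2 : R)] {W : Matrix n n R} (h : IsUnit (1 + W).det) :
    cayley (cayley W) = W := by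
  have hplus : (1 + cayley W) * (1 + W) = (2 : R) • 1 := by
    rw [cayley, add_mul, one_mul, mul_assoc, nonsing_inv_mul _ h, mul_one, two_smul]; abel
  have hminus : (1 - cayley W) * (1 + W) = (2 : R) • W := by
    rw [cayley, sub_mul, one_mul, mul_assoc, nonsing_inv_mul _ h, mul_one, two_smul]; abel
  have hinv : (1 + cayley W)⁻¹ = ⅟(2 : R) • (1 + W) := by
    apply inv_eq_right_inv
    rw [mul_smul_comm, hplus, smul_smul, invOf_mul_self, one_smul]
  rw [cayley, hinv, mul_smul_comm, hminus, smul_smul, invOf_mul_self, one_smul]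

theorem map_nonsing_inv {K L : Type*} [Field K] [Field L] (f : K →+* L) (A : Matrix n n K) :
    A⁻¹.map f = (A.map f)⁻¹ := by
  have hdet : (A.map f).det = f A.det := (f.map_det A).symm
  have hadj : (A.map f).adjugate = A.adjugate.map f := (f.map_adjugate A).symm
  rw [inv_def, inv_def, hdet, hadj]
  ext i j
  simp [Ring.inverse_eq_inv']

theorem map_cayley {K L : Type*} [Field K] [Field L] (f : K →+* L) (A : Matrix n n K) :
    (cayley A).map f = cayley (A.map f) := by
  have hsub : (1 - A).map f = 1 - A.map f := by simpa using map_sub f.mapMatrix 1 A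
  have hadd : (1 + A).map f = 1 + A.map f := by simpa using map_add f.mapMatrix 1 A
  rw [cayley, cayley, Matrix.map_mul, map_nonsing_inv, hsub, hadd]

theorem continuousAt_cayley {𝕜 : Type*} [Field 𝕜] [TopologicalSpace 𝕜] [IsTopologicalDivisionRing 𝕜]
    {A : Matrix n n 𝕜} (h : (1 + A).det ≠ 0) : ContinuousAt cayley A := by
  have hinv : ContinuousAt Inv.inv (1 + A) := by
    apply continuousAt_matrix_inv
    rw [Ring.inverse_eq_inv']
    exact continuousAt_inv₀ h
  exact (continuous_const.sub continuous_id).continuousAt.mul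
    (hinv.comp (continuous_const.add continuous_id).continuousAt)

end Cayley

section Rational

theorem mem_closure_map_ratCast_skew {A : Matrix n n ℝ} (hA : Aᵀ = -A) :
    A ∈ closure ((fun C : Matrix n n ℚ => C.map (↑)) '' {C | Cᵀ = -C}) := by
  have hdense : DenseRange (fun C : Matrix n n ℚ => C.map ((↑) : ℚ → ℝ)) :=
    DenseRange.piMap fun _ => DenseRange.piMap fun _ => Rat.denseRange_cast
  let skewPart : Matrix n n ℝ → Matrix n n ℝ := fun X => (2 : ℝ)⁻¹ • (X - Xᵀ)
  have hfix : skewPart A = A := by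
    simp only [skewPart, hA, sub_neg_eq_add, ← two_smul ℝ A, smul_smul]
    norm_num
  have hcont : Continuous skewPart := by fun_prop
  rw [← hfix]
  refine closure_mono ?_ (mem_closure_image hcont.continuousAt (hdense.closure_eq ▸ Set.mem_univ A))
  rintro _ ⟨_, ⟨C, rfl⟩, rfl⟩
  refine ⟨(2 : ℚ)⁻¹ • (C - Cᵀ), ?_, ?_⟩
  · simp only [Set.mem_ofPred_eq, transpose_smul, transpose_sub, transpose_transpose, ← smul_neg,
      neg_sub]
  · ext i j
    simp [skewPart]

variable [Fintype n] [DecidableEq n]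

variable (n) in
noncomputable def rationalOrthogonalGroup : Submonoid (Matrix n n ℝ) :=
  orthogonalGroup n ℝ ⊓ (Rat.castHom ℝ).mapMatrix.range.toSubmonoid

theorem mem_rationalOrthogonalGroup_iff {U : Matrix n n ℝ} :
    U ∈ rationalOrthogonalGroup n ↔ Uᵀ * U = 1 ∧ ∀ i j, ∃ q : ℚ, U i j = q := by
  rw [rationalOrthogonalGroup, Submonoid.mem_inf, mem_orthogonalGroup_iff' _ _]
  refine and_congr_right fun _ => ⟨?_, fun h => ?_⟩
  · rintro ⟨C, rfl⟩ i j
    exact ⟨C i j, rfl⟩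
  · choose C hC using h
    exact ⟨of C, ext fun i j => (hC i j).symm⟩

theorem cayley_map_ratCast_mem_rationalOrthogonalGroup {C : Matrix n n ℚ} (hC : Cᵀ = -C) :
    cayley (C.map ((↑) : ℚ → ℝ)) ∈ rationalOrthogonalGroup n := by
  have hskew : (C.map ((↑) : ℚ → ℝ))ᵀ = -C.map (↑) := by
    rw [← transpose_map, hC, Matrix.map_neg _ Rat.cast_neg]
  have hunit := isUnit_iff_ne_zero.2 (det_one_add_ne_zero_of_transpose_eq_neg hskew)
  exact ⟨(mem_orthogonalGroup_iff' _ _).2 (cayley_transpose_mul_self hskew hunit),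
    cayley C, map_cayley _ C⟩

theorem mem_closure_rationalOrthogonalGroup {W : Matrix n n ℝ} (hW : Wᵀ * W = 1)
    (h : IsUnit (1 + W).det) : W ∈ closure (rationalOrthogonalGroup n : Set (Matrix n n ℝ)) := by
  have hskew := transpose_cayley hW h
  rw [← cayley_cayley h]
  refine closure_mono ?_ (mem_closure_image
    (continuousAt_cayley (det_one_add_ne_zero_of_transpose_eq_neg hskew))
    (mem_closure_map_ratCast_skew hskew))
  rintro _ ⟨_, ⟨C, hC, rfl⟩, rfl⟩
  exact cayley_map_ratCast_mem_rationalOrthogonalGroup hC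

theorem exists_sign_mem_rationalOrthogonalGroup (U : Matrix n n ℝ) :
    ∃ D ∈ rationalOrthogonalGroup n, D * D = 1 ∧ IsUnit (1 + D * U).det := by
  obtain ⟨d, hd, hdet⟩ := exists_sign_det_add_diagonal_ne_zero U
  have hdd : diagonal d * diagonal d = 1 := by
    rw [diagonal_mul_diagonal, ← diagonal_one]
    congr 1
    ext i
    rcases hd i with h | h <;> simp [h]
  refine ⟨diagonal d, mem_rationalOrthogonalGroup_iff.2 ⟨by rwa [diagonal_transpose], ?_⟩, hdd, ?_⟩
  · intro i j
    rcases eq_or_ne i j with rfl | hij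
    · rcases hd i with h | h
      · exact ⟨1, by simp [h]⟩
      · exact ⟨-1, by simp [h]⟩
    · exact ⟨0, by simp [hij]⟩
  · have hsplit : 1 + diagonal d * U = diagonal d * (U + diagonal d) := by
      rw [mul_add, hdd, add_comm]
    rw [hsplit, det_mul]
    refine .mul (.of_mul_eq_one (diagonal d).det ?_) (isUnit_iff_ne_zero.2 hdet)
    rw [← det_mul, hdd, det_one]

end Rational

end Matrix

open Matrix

/-- **Density of the rational orthogonal group.**
The rational orthogonal group `O(n,ℚ)`, i.e. the set of real orthogonal `n×n` matrices all of
whose entries are rational, is dense in the real orthogonal group `O(n,ℝ)` (with the topology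
induced from the space of `n×n` real matrices). -/
theorem rational_orthogonal_dense (n : ℕ) :
    {U : Matrix (Fin n) (Fin n) ℝ | Uᵀ * U = 1} ⊆
      closure {U : Matrix (Fin n) (Fin n) ℝ | Uᵀ * U = 1 ∧ ∀ i j, ∃ q : ℚ, U i j = (q : ℝ)} := by
  intro U hU
  obtain ⟨D, hD, hDD, hunit⟩ := exists_sign_mem_rationalOrthogonalGroup U
  have hDU : (D * U)ᵀ * (D * U) = 1 :=
    (mem_orthogonalGroup_iff' _ _).1 (mul_mem hD.1 ((mem_orthogonalGroup_iff' _ _).2 hU))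
  have hU' := (rationalOrthogonalGroup (Fin n)).topologicalClosure.mul_mem
    ((rationalOrthogonalGroup (Fin n)).le_topologicalClosure hD)
    (mem_closure_rationalOrthogonalGroup hDU hunit)
  rw [← mul_assoc, hDD, one_mul] at hU'
  exact closure_mono (fun V hV => mem_rationalOrthogonalGroup_iff.1 hV) hU'
end

section
/- Let A be an n×n real expansive matrix. Suppose Ψ = {ψ¹, …, ψᴸ} ⊂ L²(ℝⁿ) is such that the wavelet system {D_{A^j} T_k ψ^l : j ∈ ℤ, k ∈ ℤⁿ, l = 1, …, L} is a Riesz basis of L²(ℝⁿ), and suppose the space of negative dilates V_0 = closure of span{D_{A^j} T_k ψ^l : j < 0, k ∈ ℤⁿ, l = 1, …, L} satisfies T_k(V_0) ⊆ V_0 for all k ∈ ℤⁿ. Then V_0 is invariant under translations by the lattice Γ = Aℤⁿ + ℤⁿ, i.e., T_γ(V_0) ⊆ V_0 for all γ ∈ Aℤⁿ + ℤⁿ. -/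
open MeasureTheory Complex Real Set Filter Submodule
open scoped FourierTransform Matrix RealInnerProductSpace ENNReal NNReal ComplexConjugate

noncomputable section

abbrev ℝn (n : ℕ) : Type := EuclideanSpace ℝ (Fin n)
abbrev L2 (n : ℕ) := MeasureTheory.Lp ℂ 2 (volume : Measure (ℝn n))

def mdot {n : ℕ} (A : Matrix (Fin n) (Fin n) ℝ) (x : ℝn n) : ℝn n :=
  (EuclideanSpace.equiv (Fin n) ℝ).symm (A.mulVec ((EuclideanSpace.equiv (Fin n) ℝ) x))

def vecR {n : ℕ} (k : Fin n → ℤ) : ℝn n :=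
  (EuclideanSpace.equiv (Fin n) ℝ).symm (fun i => (k i : ℝ))

/-- A real matrix is expansive if all of its (complex) eigenvalues have modulus > 1. -/
def Expansive {n : ℕ} (A : Matrix (Fin n) (Fin n) ℝ) : Prop :=
  ∀ μ ∈ spectrum ℂ (A.map (Complex.ofReal)), 1 < ‖μ‖

/-- Translation operator `T_k` on `L²(ℝⁿ)`: `T_k f (x) = f (x - k)`. -/
def translateL {n : ℕ} (k : ℝn n) (f : L2 n) : L2 n :=
  MemLp.toLp (fun x => f (x - k))
    ((Lp.memLp f).comp_measurePreserving (measurePreserving_sub_right volume k))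

/-- The full rank lattice `P ℤⁿ`. -/
def latticeOf {n : ℕ} (P : Matrix (Fin n) (Fin n) ℝ) : Set (ℝn n) :=
  Set.range fun k : Fin n → ℤ => mdot P (vecR k)

/-- The standard lattice `ℤⁿ ⊆ ℝⁿ`. -/
def intLattice (n : ℕ) : Set (ℝn n) := Set.range (vecR (n := n))

/-- The lattice `Aℤⁿ + ℤⁿ`. -/
def ratLattice {n : ℕ} (A : Matrix (Fin n) (Fin n) ℝ) : Set (ℝn n) :=
  {x | ∃ a b : Fin n → ℤ, x = mdot A (vecR a) + vecR b}

/-- The dual lattice `Γ* = {k : ⟨k,γ⟩ ∈ ℤ for all γ ∈ Γ}`. -/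
def dualLattice {n : ℕ} (Γ : Set (ℝn n)) : Set (ℝn n) :=
  {k | ∀ γ ∈ Γ, ∃ m : ℤ, (inner ℝ k γ : ℝ) = (m : ℝ)}

/-- `F` is the (Plancherel / L²) Fourier transform of `f`, characterized by the
multiplication formula against Schwartz functions. -/
def IsFourierOf {n : ℕ} (f F : ℝn n → ℂ) : Prop :=
  MemLp F 2 (volume : Measure (ℝn n)) ∧
  ∀ g : SchwartzMap (ℝn n) ℂ, ∫ ξ, F ξ * g ξ = ∫ x, f x * 𝓕 (⇑g) x

/-- `d : Fin p → ℝⁿ` is a complete set of representatives of the distinct cosets of `Γ/Λ`. -/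
def IsTransversal {n : ℕ} (Γ Λ : Set (ℝn n)) {p : ℕ} (d : Fin p → ℝn n) : Prop :=
  (∀ j, d j ∈ Γ) ∧ (∀ j j', j ≠ j' → d j - d j' ∉ Λ) ∧ (∀ γ ∈ Γ, ∃ j, γ - d j ∈ Λ)

/-- `{V_j}` is an `(A,Γ)`-MRA with scaling vector `φ = (φ¹,…,φᴺ)` (multiplicity `N`). -/
structure IsMRA {n : ℕ} (A : Matrix (Fin n) (Fin n) ℝ) (Γ : Set (ℝn n)) {N : ℕ}
    (V : ℤ → Submodule ℂ (L2 n)) (φ : Fin N → L2 n) : Prop where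
  closed : ∀ j : ℤ, IsClosed (V j : Set (L2 n))
  mono : ∀ j : ℤ, V j ≤ V (j + 1)
  inter_bot : (⋂ j : ℤ, (V j : Set (L2 n))) = {0}
  union_dense : Dense (⋃ j : ℤ, (V j : Set (L2 n)))
  dilate : ∀ (j : ℤ) (f g : L2 n),
    (∀ᵐ x ∂(volume : Measure (ℝn n)), g x = f (mdot (A ^ j) x)) → (f ∈ V 0 ↔ g ∈ V j)
  orthonormal : Orthonormal ℂ (fun p : Γ × Fin N => translateL p.1.1 (φ p.2))
  span_eq : (Submodule.span ℂ
      (Set.range fun p : Γ × Fin N => translateL p.1.1 (φ p.2))).topologicalClosure = V 0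

/-- `ψ = (ψ¹,…,ψᴸ)` is an orthonormal wavelet for the dilation `A` and lattice `ℤⁿ`. -/
def IsOrthonormalWavelet {n L : ℕ} (A : Matrix (Fin n) (Fin n) ℝ)
    (ψ : Fin L → ℝn n → ℂ) : Prop :=
  ∃ W : (ℤ × (Fin n → ℤ) × Fin L) → L2 n,
    (∀ (j : ℤ) (k : Fin n → ℤ) (l : Fin L), (W (j, k, l) : ℝn n → ℂ) =ᵐ[volume]
      fun x => (|A.det| ^ ((j : ℝ) / 2) : ℝ) * ψ l (mdot (A ^ j) x - vecR k)) ∧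
    Orthonormal ℂ W ∧
    (Submodule.span ℂ (Set.range W)).topologicalClosure = ⊤

/-- A quasi-norm associated with an expansive dilation `A`. -/
def IsQuasiNorm {n : ℕ} (A : Matrix (Fin n) (Fin n) ℝ) (ρ : ℝn n → ℝ) : Prop :=
  Continuous ρ ∧ (∀ x, 0 ≤ ρ x) ∧ (∀ x, x ≠ 0 → 0 < ρ x) ∧ (∀ x, ρ (-x) = ρ x) ∧
  (∀ x, ρ (mdot A x) = |A.det| * ρ x) ∧ ∃ c : ℝ, 0 < c ∧ ∀ x y, ρ (x + y) ≤ c * (ρ x + ρ y)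


/-- A family `e` in `L²(ℝⁿ)` is a Riesz basis of the closed subspace `V`. -/
def IsRieszBasisOf {n : ℕ} {ι : Type*} (e : ι → L2 n) (V : Submodule ℂ (L2 n)) : Prop :=
  (Submodule.span ℂ (Set.range e)).topologicalClosure = V ∧
  ∃ C₁ C₂ : ℝ, 0 < C₁ ∧ 0 < C₂ ∧ ∀ c : ι →₀ ℂ,
    C₁ * ∑ i ∈ c.support, ‖c i‖ ^ 2 ≤ ‖∑ i ∈ c.support, c i • e i‖ ^ 2 ∧
    ‖∑ i ∈ c.support, c i • e i‖ ^ 2 ≤ C₂ * ∑ i ∈ c.support, ‖c i‖ ^ 2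

/-!
Write `D = D_A` and `V_m` for the closed span of the wavelets `D_{A^j} T_k ψˡ` with `j < m`, so
that `V₀` is the space of negative dilates. On generators `D` shifts `j` by one, hence
`D V_m ⊆ V_{m+1}` and `D⁻¹ V_{m+1} ⊆ V_m`. The space `V₁` is `ℤⁿ`-invariant: its generators with
`j < 0` lie in the `ℤⁿ`-invariant space `V₀`, and those with `j = 0` are permuted by integer
translations. Since `D T_{Aa} = T_a D`, the operator `T_{Aa} = D⁻¹ T_a D` maps `V₀` into `V₀`, and
so does `T_{Aa + b} = T_b T_{Aa}`.
-/

variable {n : ℕ}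

lemma mdot_eq_toLpLin (B : Matrix (Fin n) (Fin n) ℝ) : mdot B = Matrix.toLpLin 2 2 B := rfl

lemma mdot_mul (M N : Matrix (Fin n) (Fin n) ℝ) (x : ℝn n) :
    mdot (M * N) x = mdot M (mdot N x) := by
  simp [mdot_eq_toLpLin, Matrix.toLpLin_mul_same]

lemma mdot_one (x : ℝn n) : mdot 1 x = x := by
  simp [mdot_eq_toLpLin]

lemma mdot_sub (B : Matrix (Fin n) (Fin n) ℝ) (x y : ℝn n) :
    mdot B (x - y) = mdot B x - mdot B y := by
  simp [mdot_eq_toLpLin]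

lemma vecR_add (a b : Fin n → ℤ) : vecR (a + b) = vecR a + vecR b := by
  ext i; simp [vecR]

lemma continuous_mdot (B : Matrix (Fin n) (Fin n) ℝ) : Continuous (mdot B) :=
  (Matrix.toLpLin 2 2 B).continuous_of_finiteDimensional

lemma measurePreserving_mdot {B : Matrix (Fin n) (Fin n) ℝ} (hB : B.det ≠ 0) :
    MeasurePreserving (mdot B) volume (ENNReal.ofReal |B.det⁻¹| • volume) := by
  have hdet : LinearMap.det (Matrix.toLpLin 2 2 B : ℝn n →ₗ[ℝ] ℝn n) = B.det := by
    rw [Matrix.toLpLin_eq_toLin, LinearMap.det_toLin]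
  refine ⟨(continuous_mdot B).measurable, ?_⟩
  rw [← hdet, mdot_eq_toLpLin]
  exact Measure.map_linearMap_addHaar_eq_smul_addHaar volume (hdet ▸ hB)

lemma Expansive.det_ne_zero {A : Matrix (Fin n) (Fin n) ℝ} (hA : Expansive A) : A.det ≠ 0 := by
  intro h
  have : (0 : ℂ) ∈ spectrum ℂ (A.map ofReal) := by
    have hmap : (A.map ofReal).det = (A.det : ℂ) := (RingHom.map_det ofRealHom A).symm
    rw [spectrum.zero_mem_iff, Matrix.isUnit_iff_isUnit_det, hmap, h]
    simp
  have := hA 0 this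
  norm_num at this

lemma coeFn_translateL (k : ℝn n) {f : L2 n} {g : ℝn n → ℂ} (hfg : ⇑f =ᵐ[volume] g) :
    ⇑(translateL k f) =ᵐ[volume] fun x => g (x - k) :=
  (MemLp.coeFn_toLp _).trans
    ((measurePreserving_sub_right volume k).quasiMeasurePreserving.ae_eq_comp hfg)

def translation (k : ℝn n) : L2 n →ₗᵢ[ℂ] L2 n :=
  Lp.compMeasurePreservingₗᵢ ℂ (fun x => x - k) (measurePreserving_sub_right volume k)

lemma translation_apply (k : ℝn n) (f : L2 n) : translation k f = translateL k f :=
  Lp.ext <| (Lp.coeFn_compMeasurePreserving _ _).trans (coeFn_translateL k .rfl).symm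

lemma translateL_translateL (x y : ℝn n) (f : L2 n) :
    translateL x (translateL y f) = translateL (x + y) f := by
  refine Lp.ext <| (coeFn_translateL x (coeFn_translateL y .rfl)).trans ?_
  simpa only [sub_sub] using (coeFn_translateL (x + y) .rfl).symm

variable {B : Matrix (Fin n) (Fin n) ℝ}

lemma memLp_dilate (hB : B.det ≠ 0) {f : ℝn n → ℂ} (hf : MemLp f 2 volume) :
    MemLp (fun x => ((|B.det| ^ (1 / 2 : ℝ) : ℝ) : ℂ) * f (mdot B x)) 2 volume :=
  ((hf.smul_measure ENNReal.ofReal_ne_top).comp_measurePreserving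
    (measurePreserving_mdot hB)).const_mul _

lemma enorm_abs_det_rpow_half_mul (hB : B.det ≠ 0) :
    ‖((|B.det| ^ (1 / 2 : ℝ) : ℝ) : ℂ)‖ₑ * ENNReal.ofReal |B.det⁻¹| ^ (1 / 2 : ℝ) = 1 := by
  have hpos : 0 < |B.det| := abs_pos.2 hB
  rw [← ofReal_norm, Complex.norm_real, Real.norm_of_nonneg (by positivity),
    ENNReal.ofReal_rpow_of_nonneg (abs_nonneg _) (by norm_num),
    ← ENNReal.ofReal_mul (by positivity),
    ← Real.mul_rpow (abs_nonneg _) (abs_nonneg _), ← abs_mul, mul_inv_cancel₀ hB]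
  simp

lemma eLpNorm_dilate (hB : B.det ≠ 0) {f : ℝn n → ℂ} (hf : AEStronglyMeasurable f volume) :
    eLpNorm (fun x => ((|B.det| ^ (1 / 2 : ℝ) : ℝ) : ℂ) * f (mdot B x)) 2 volume =
      eLpNorm f 2 volume := by
  have hf' : AEStronglyMeasurable f (ENNReal.ofReal |B.det⁻¹| • volume) :=
    hf.mono_ac Measure.smul_absolutelyContinuous
  change eLpNorm (((|B.det| ^ (1 / 2 : ℝ) : ℝ) : ℂ) • (f ∘ mdot B)) 2 volume = _
  rw [eLpNorm_const_smul, eLpNorm_comp_measurePreserving hf' (measurePreserving_mdot hB),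
    eLpNorm_smul_measure_of_ne_top (by norm_num), smul_eq_mul, ← mul_assoc,
    show (1 / 2 : ℝ≥0∞).toReal = 1 / 2 by norm_num, enorm_abs_det_rpow_half_mul hB, one_mul]

lemma quasiMeasurePreserving_mdot (hB : B.det ≠ 0) :
    Measure.QuasiMeasurePreserving (mdot B) volume volume :=
  ⟨(continuous_mdot B).measurable, by
    rw [(measurePreserving_mdot hB).map_eq]; exact Measure.smul_absolutelyContinuous⟩

def dilation (hB : B.det ≠ 0) : L2 n →ₗᵢ[ℂ] L2 n where
  toFun f := (memLp_dilate hB (Lp.memLp f)).toLp _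
  map_add' f g := by
    rw [← MemLp.toLp_add]
    refine MemLp.toLp_congr _ _ ?_
    filter_upwards [(quasiMeasurePreserving_mdot hB).ae_eq_comp (Lp.coeFn_add f g)] with x hx
    simp only [Function.comp_apply, Pi.add_apply] at hx
    simp only [Pi.add_apply]
    rw [hx, mul_add]
  map_smul' c f := by
    rw [RingHom.id_apply, ← MemLp.toLp_const_smul]
    refine MemLp.toLp_congr _ _ ?_
    filter_upwards [(quasiMeasurePreserving_mdot hB).ae_eq_comp (Lp.coeFn_smul c f)] with x hx
    simp only [Function.comp_apply, Pi.smul_apply] at hx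
    simp only [Pi.smul_apply, smul_eq_mul]
    rw [hx, smul_eq_mul, mul_left_comm]
  norm_map' f := by
    rw [LinearMap.coe_mk, AddHom.coe_mk, Lp.norm_toLp,
      eLpNorm_dilate hB (Lp.aestronglyMeasurable f), Lp.norm_def]

lemma coeFn_dilation (hB : B.det ≠ 0) {f : L2 n} {g : ℝn n → ℂ} (hfg : ⇑f =ᵐ[volume] g) :
    ⇑(dilation hB f) =ᵐ[volume] fun x => ((|B.det| ^ (1 / 2 : ℝ) : ℝ) : ℂ) * g (mdot B x) := by
  filter_upwards [MemLp.coeFn_toLp (memLp_dilate hB (Lp.memLp f)),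
    (quasiMeasurePreserving_mdot hB).ae_eq_comp hfg] with x hx hx'
  simp_all [dilation]

lemma dilation_translateL (hB : B.det ≠ 0) (v : ℝn n) (f : L2 n) :
    dilation hB (translateL (mdot B v) f) = translateL v (dilation hB f) := by
  refine Lp.ext <| (coeFn_dilation hB (coeFn_translateL _ .rfl)).trans ?_
  simpa only [mdot_sub] using (coeFn_translateL v (coeFn_dilation hB .rfl)).symm

lemma dilation_inv_dilation (hB : B.det ≠ 0) (hB' : B⁻¹.det ≠ 0) (f : L2 n) :
    dilation hB' (dilation hB f) = f := by
  have hdet : |B⁻¹.det| * |B.det| = 1 := by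
    rw [← abs_mul, ← Matrix.det_mul, Matrix.nonsing_inv_mul _ hB.isUnit, Matrix.det_one, abs_one]
  refine Lp.ext <| (coeFn_dilation hB' (coeFn_dilation hB .rfl)).trans (.of_eq ?_)
  ext x
  rw [← mdot_mul, Matrix.mul_nonsing_inv _ hB.isUnit, mdot_one, ← mul_assoc, ← Complex.ofReal_mul,
    ← Real.mul_rpow (abs_nonneg _) (abs_nonneg _), hdet, Real.one_rpow, Complex.ofReal_one, one_mul]

section DilatesBelow

variable (𝕜 : Type*) {E K ι : Type*} [NormedField 𝕜] [NormedAddCommGroup E] [NormedSpace 𝕜 E]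

def dilatesBelow (W : ℤ × K × ι → E) (m : ℤ) : Submodule 𝕜 E :=
  (span 𝕜 {g | ∃ j k l, j < m ∧ g = W (j, k, l)}).topologicalClosure

variable {𝕜} {W : ℤ × K × ι → E}

lemma mem_dilatesBelow {m j : ℤ} (hj : j < m) (k : K) (l : ι) :
    W (j, k, l) ∈ dilatesBelow 𝕜 W m :=
  le_topologicalClosure _ (subset_span ⟨j, k, l, hj, rfl⟩)

lemma dilatesBelow_mono {m m' : ℤ} (h : m ≤ m') : dilatesBelow 𝕜 W m ≤ dilatesBelow 𝕜 W m' :=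
  topologicalClosure_mono <| span_mono fun _ ⟨j, k, l, hj, hg⟩ => ⟨j, k, l, hj.trans_le h, hg⟩

lemma map_mem_dilatesBelow (φ : E →L[𝕜] E) {m m' : ℤ}
    (hφ : ∀ j k l, j < m → φ (W (j, k, l)) ∈ dilatesBelow 𝕜 W m') {f : E}
    (hf : f ∈ dilatesBelow 𝕜 W m) : φ f ∈ dilatesBelow 𝕜 W m' := by
  refine topologicalClosure_minimal _ (t := (dilatesBelow 𝕜 W m').comap (φ : E →ₗ[𝕜] E)) ?_ ?_ hf
  · exact span_le.2 fun _ ⟨j, k, l, hj, hg⟩ => hg ▸ hφ j k l hj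
  · exact (isClosed_topologicalClosure _).preimage φ.continuous

end DilatesBelow

/-- `W (j, k, l)` is `D_{A^j} T_k ψˡ`. -/
def IsWaveletSystem {ι : Type*} (A : Matrix (Fin n) (Fin n) ℝ) (ψ : ι → ℝn n → ℂ)
    (W : ℤ × (Fin n → ℤ) × ι → L2 n) : Prop :=
  ∀ j k l, (W (j, k, l) : ℝn n → ℂ) =ᵐ[volume]
    fun x => ((|A.det| ^ ((j : ℝ) / 2) : ℝ) : ℂ) * ψ l (mdot (A ^ j) x - vecR k)

namespace IsWaveletSystem

variable {ι : Type*} {A : Matrix (Fin n) (Fin n) ℝ} {ψ : ι → ℝn n → ℂ}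
  {W : ℤ × (Fin n → ℤ) × ι → L2 n}

lemma dilation_apply (hW : IsWaveletSystem A ψ W) (hA : A.det ≠ 0) (j : ℤ) (k : Fin n → ℤ)
    (l : ι) : dilation hA (W (j, k, l)) = W (j + 1, k, l) := by
  refine Lp.ext <| (coeFn_dilation hA (hW j k l)).trans (.trans (.of_eq ?_) (hW (j + 1) k l).symm)
  ext x
  rw [← mdot_mul, ← Matrix.zpow_add_one hA.isUnit, ← mul_assoc, ← Complex.ofReal_mul,
    ← Real.rpow_add (abs_pos.2 hA)]
  push_cast
  ring_nf

lemma dilation_inv_apply (hW : IsWaveletSystem A ψ W) (hA : A.det ≠ 0) (hA' : A⁻¹.det ≠ 0)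
    (j : ℤ) (k : Fin n → ℤ) (l : ι) : dilation hA' (W (j, k, l)) = W (j - 1, k, l) := by
  conv_lhs => rw [← sub_add_cancel j 1, ← hW.dilation_apply hA]
  exact dilation_inv_dilation hA hA' _

lemma translateL_vecR_apply_zero (hW : IsWaveletSystem A ψ W) (a k : Fin n → ℤ) (l : ι) :
    translateL (vecR a) (W (0, k, l)) = W (0, a + k, l) := by
  refine Lp.ext <| (coeFn_translateL _ (hW 0 k l)).trans (.trans (.of_eq ?_) (hW 0 (a + k) l).symm)
  ext x
  rw [zpow_zero, mdot_one, mdot_one, vecR_add, sub_sub]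

lemma dilation_mem_dilatesBelow (hW : IsWaveletSystem A ψ W) (hA : A.det ≠ 0) {m : ℤ}
    {f : L2 n} (hf : f ∈ dilatesBelow ℂ W m) : dilation hA f ∈ dilatesBelow ℂ W (m + 1) :=
  map_mem_dilatesBelow (dilation hA).toContinuousLinearMap (fun j k l hj => by
    rw [LinearIsometry.coe_toContinuousLinearMap, hW.dilation_apply hA]
    exact mem_dilatesBelow (by omega) k l) hf

lemma dilation_inv_mem_dilatesBelow (hW : IsWaveletSystem A ψ W) (hA : A.det ≠ 0)
    (hA' : A⁻¹.det ≠ 0) {m : ℤ} {f : L2 n} (hf : f ∈ dilatesBelow ℂ W (m + 1)) :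
    dilation hA' f ∈ dilatesBelow ℂ W m :=
  map_mem_dilatesBelow (dilation hA').toContinuousLinearMap (fun j k l hj => by
    rw [LinearIsometry.coe_toContinuousLinearMap, hW.dilation_inv_apply hA hA']
    exact mem_dilatesBelow (by omega) k l) hf

lemma translateL_mem_dilatesBelow_one (hW : IsWaveletSystem A ψ W)
    (hSI : ∀ a : Fin n → ℤ, ∀ f ∈ dilatesBelow ℂ W 0, translateL (vecR a) f ∈ dilatesBelow ℂ W 0)
    (a : Fin n → ℤ) {f : L2 n} (hf : f ∈ dilatesBelow ℂ W 1) :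
    translateL (vecR a) f ∈ dilatesBelow ℂ W 1 := by
  rw [← translation_apply]
  refine map_mem_dilatesBelow (translation (vecR a)).toContinuousLinearMap (fun j k l hj => ?_) hf
  rw [LinearIsometry.coe_toContinuousLinearMap, translation_apply]
  rcases lt_or_eq_of_le (show j ≤ 0 by omega) with hj | rfl
  · exact dilatesBelow_mono zero_le_one (hSI a _ (mem_dilatesBelow hj k l))
  · rw [hW.translateL_vecR_apply_zero]
    exact mem_dilatesBelow zero_lt_one _ l

lemma translateL_mdot_mem_dilatesBelow_zero (hW : IsWaveletSystem A ψ W) (hA : A.det ≠ 0)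
    (hSI : ∀ a : Fin n → ℤ, ∀ f ∈ dilatesBelow ℂ W 0, translateL (vecR a) f ∈ dilatesBelow ℂ W 0)
    (a : Fin n → ℤ) {f : L2 n} (hf : f ∈ dilatesBelow ℂ W 0) :
    translateL (mdot A (vecR a)) f ∈ dilatesBelow ℂ W 0 := by
  have hA' : A⁻¹.det ≠ 0 := (Matrix.isUnit_nonsing_inv_det A hA.isUnit).ne_zero
  have hDf : dilation hA f ∈ dilatesBelow ℂ W (0 + 1) := hW.dilation_mem_dilatesBelow hA hf
  rw [zero_add] at hDf
  have hTDf := hW.translateL_mem_dilatesBelow_one hSI a hDf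
  rw [← zero_add (1 : ℤ)] at hTDf
  rw [← dilation_inv_dilation hA hA' (translateL _ f), dilation_translateL]
  exact hW.dilation_inv_mem_dilatesBelow hA hA' hTDf

end IsWaveletSystem

theorem negative_dilates_extra_invariance_general (n L : ℕ)
    (A : Matrix (Fin n) (Fin n) ℝ) (hA : Expansive A)
    (ψ : Fin L → ℝn n → ℂ)
    -- `W (j,k,l)` is the wavelet system member `D_{A^j} T_k ψˡ` :
    (W : ℤ × (Fin n → ℤ) × Fin L → L2 n)
    (hW : ∀ (j : ℤ) (k : Fin n → ℤ) (l : Fin L), (W (j, k, l) : ℝn n → ℂ) =ᵐ[volume]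
      fun x => ((|A.det| ^ ((j : ℝ) / 2) : ℝ) : ℂ) * ψ l (mdot (A ^ j) x - vecR k))
    -- the space of negative dilates :
    (V0 : Submodule ℂ (L2 n))
    (hV0 : V0 = (Submodule.span ℂ
      {g : L2 n | ∃ (j : ℤ) (k : Fin n → ℤ) (l : Fin L), j < 0 ∧ g = W (j, k, l)}
      ).topologicalClosure)
    -- `V₀` is invariant under integer translations :
    (hSI : ∀ k : Fin n → ℤ, ∀ f ∈ V0, translateL (vecR k) f ∈ V0) :
    ∀ γ ∈ ratLattice A, ∀ f ∈ V0, translateL γ f ∈ V0 := by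
  rintro _ ⟨a, b, rfl⟩ f hf
  subst hV0
  have hW' : IsWaveletSystem A ψ W := hW
  rw [add_comm, ← translateL_translateL]
  exact hSI b _ (hW'.translateL_mdot_mem_dilatesBelow_zero hA.det_ne_zero hSI a hf)

/-- **Extra shift invariance of the space of negative dilates** (Lemma 7.10).
Let `A` be expansive and let `Ψ = {ψ¹,…,ψᴸ}` generate a Riesz wavelet basis of `L²(ℝⁿ)`.
If the space of negative dilates `V₀` is invariant under integer translations, then it is
invariant under translations by the lattice `Γ = Aℤⁿ + ℤⁿ`. -/
theorem negative_dilates_extra_invariance (n L : ℕ)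
    (A : Matrix (Fin n) (Fin n) ℝ) (hA : Expansive A)
    (ψ : Fin L → ℝn n → ℂ)
    -- `W (j,k,l)` is the wavelet system member `D_{A^j} T_k ψˡ` :
    (W : ℤ × (Fin n → ℤ) × Fin L → L2 n)
    (hW : ∀ (j : ℤ) (k : Fin n → ℤ) (l : Fin L), (W (j, k, l) : ℝn n → ℂ) =ᵐ[volume]
      fun x => ((|A.det| ^ ((j : ℝ) / 2) : ℝ) : ℂ) * ψ l (mdot (A ^ j) x - vecR k))
    -- the wavelet system is a Riesz basis of `L²(ℝⁿ)` :
    (hRiesz : IsRieszBasisOf W (⊤ : Submodule ℂ (L2 n)))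
    -- the space of negative dilates :
    (V0 : Submodule ℂ (L2 n))
    (hV0 : V0 = (Submodule.span ℂ
      {g : L2 n | ∃ (j : ℤ) (k : Fin n → ℤ) (l : Fin L), j < 0 ∧ g = W (j, k, l)}
      ).topologicalClosure)
    -- `V₀` is invariant under integer translations :
    (hSI : ∀ k : Fin n → ℤ, ∀ f ∈ V0, translateL (vecR k) f ∈ V0) :
    ∀ γ ∈ ratLattice A, ∀ f ∈ V0, translateL γ f ∈ V0 :=
  negative_dilates_extra_invariance_general n L A hA ψ W hW V0 hV0 hSI
end
end
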